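/- Let V be a type of vertices with a label function L : V → Fin (k+1), and let F be a set of triangular faces all of which are rk-faces. Let f = {v₁, v₂, v₃} ∈ F with label i ≠ 0, and let v_n ∉ f be a new vertex with L(v_n) = i. Then every face of the set F' = (F \ {f}) ∪ {{v_n, v₁, v₂}, {v_n, v₂, v₃}, {v_n, v₁, v₃}} obtained by one face-split step is an rk-face; i.e., a face split using the labeling rule L(v_n) = L(f) on an rk-mesh produces an rk-mesh. -/

import Mathlib

/-- A face (finite set of vertices) is regular k-labeled (an rk-face) w.r.t. a label
function `L : V → Fin (k+1)` if some vertex has nonzero label, and any two vertices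
with nonzero labels have equal labels. -/
def rkFace {V : Type*} {k : ℕ} (L : V → Fin (k + 1)) (f : Finset V) : Prop :=
  (∃ v ∈ f, L v ≠ 0) ∧ ∀ v₁ ∈ f, ∀ v₂ ∈ f, L v₁ ≠ 0 → L v₂ ≠ 0 → L v₁ = L v₂

theorem rkFace.insert_of_subset {V : Type*} [DecidableEq V] {k : ℕ} {L : V → Fin (k + 1)}
    {f s : Finset V} (hf : rkFace L f) (hs : s ⊆ f) {v w : V} (hv : v ∈ f) (hvw : L v = L w)
    (hw : L w ≠ 0) : rkFace L (insert w s) := by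
  have label_eq : ∀ x ∈ insert w s, L x ≠ 0 → L x = L w := by
    intro x hx hx0
    rcases Finset.mem_insert.mp hx with rfl | hxs
    · rfl
    · exact hvw ▸ hf.2 x (hs hxs) v hv hx0 (hvw ▸ hw)
  exact ⟨⟨w, Finset.mem_insert_self w s, hw⟩, fun x hx y hy hx0 hy0 =>
    (label_eq x hx hx0).trans (label_eq y hy hy0).symm⟩

theorem faceSplit_rkMesh_general {V : Type*} [DecidableEq V] {k : ℕ}
    (L : V → Fin (k + 1)) (F : Set (Finset V)) (hF : ∀ f ∈ F, rkFace L f)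
    (v₁ v₂ v₃ vn : V) (i : Fin (k + 1)) (hi : i ≠ 0)
    (hfF : ({v₁, v₂, v₃} : Finset V) ∈ F)
    (hlabel : ∃ v ∈ ({v₁, v₂, v₃} : Finset V), L v = i)
    (hLn : L vn = i) :
    ∀ g ∈ (F \ {({v₁, v₂, v₃} : Finset V)}) ∪
        {({vn, v₁, v₂} : Finset V), ({vn, v₂, v₃} : Finset V),
          ({vn, v₁, v₃} : Finset V)},
      rkFace L g := by
  obtain ⟨v, hv, hvi⟩ := hlabel
  have split_face : ∀ s ⊆ ({v₁, v₂, v₃} : Finset V), rkFace L (insert vn s) := fun s hs =>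
    (hF _ hfF).insert_of_subset hs hv (hvi.trans hLn.symm) (hLn ▸ hi)
  rintro g (⟨hgF, -⟩ | hg)
  · exact hF g hgF
  · rcases hg with rfl | rfl | rfl <;> apply split_face <;> intro x <;> simp <;> tauto

/-- A face split, using the labeling rule `L(v_n) = L(f)`, on an rk-mesh produces
an rk-mesh. -/
theorem faceSplit_rkMesh {V : Type*} [DecidableEq V] {k : ℕ}
    (L : V → Fin (k + 1)) (F : Set (Finset V)) (hF : ∀ f ∈ F, rkFace L f)
    (v₁ v₂ v₃ vn : V) (i : Fin (k + 1)) (hi : i ≠ 0)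
    (hfF : ({v₁, v₂, v₃} : Finset V) ∈ F)
    (hlabel : ∃ v ∈ ({v₁, v₂, v₃} : Finset V), L v = i)
    (hnew : vn ∉ ({v₁, v₂, v₃} : Finset V)) (hLn : L vn = i) :
    ∀ g ∈ (F \ {({v₁, v₂, v₃} : Finset V)}) ∪
        {({vn, v₁, v₂} : Finset V), ({vn, v₂, v₃} : Finset V),
          ({vn, v₁, v₃} : Finset V)},
      rkFace L g :=
  faceSplit_rkMesh_general L F hF v₁ v₂ v₃ vn i hi hfF hlabel hLn
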